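/- arXiv:1706.09655 — 6 statements merged into one kernel-verified Lean document; each statement's English description precedes it below -/
import Mathlib

section
/- Weak duality for the hydropower problem: if D is an admissible feasible drain process and y = (γ_t, v_t, λ_t, w_t)_{t=1}^{T−1} is a dual feasible variable, then J(D) ≤ Φ(y). -/
open MeasureTheory Finset

noncomputable section

/-- Water level at time `t` induced by initial level `V1`, inflow `R` and drain `D`:
`V(t) = V(1) + ∑_{s=1}^{t-1} (R(s) - D(s))`. -/
def waterLevel {Ω : Type*} {N : ℕ} (V1 : Fin N → ℝ) (R D : ℕ → Ω → Fin N → ℝ)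
    (t : ℕ) (ω : Ω) (i : Fin N) : ℝ :=
  V1 i + ∑ s ∈ Finset.Ico 1 t, (R s ω i - D s ω i)

/-- Expected revenue `J(D) = E[∑_{t=1}^{T-1} D(t)·S(t+1) + α S(T)·V(T)]`. -/
def revenue {Ω : Type*} {N : ℕ} [MeasurableSpace Ω] (P : Measure Ω) (T : ℕ)
    (S R : ℕ → Ω → Fin N → ℝ) (V1 : Fin N → ℝ) (α : ℝ)
    (D : ℕ → Ω → Fin N → ℝ) : ℝ :=
  ∫ ω, (∑ t ∈ Finset.Ico 1 T, ∑ i, D t ω i * S (t + 1) ω i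
    + α * ∑ i, S T ω i * waterLevel V1 R D T ω i) ∂P

/-- A drain process is admissible if each `D(t)` is `G t`-measurable and bounded,
for `t = 1, …, T-1`. -/
def Admissible {Ω : Type*} {N : ℕ} (T : ℕ) (G : ℕ → MeasurableSpace Ω)
    (D : ℕ → Ω → Fin N → ℝ) : Prop :=
  ∀ t, 1 ≤ t → t ≤ T - 1 →
    Measurable[G t] (D t) ∧ ∃ C : ℝ, ∀ ω i, |D t ω i| ≤ C

/-- Feasibility: almost surely, `0 ≤ D(t) ≤ b` and `D(t) ≤ V(t) ≤ m`
componentwise for all `t = 1, …, T-1`. -/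
def FeasibleDrain {Ω : Type*} {N : ℕ} [MeasurableSpace Ω] (P : Measure Ω) (T : ℕ)
    (R : ℕ → Ω → Fin N → ℝ) (V1 b m : Fin N → ℝ)
    (D : ℕ → Ω → Fin N → ℝ) : Prop :=
  ∀ᵐ ω ∂P, ∀ t, 1 ≤ t → t ≤ T - 1 → ∀ i,
    0 ≤ D t ω i ∧ D t ω i ≤ b i ∧ D t ω i ≤ waterLevel V1 R D t ω i ∧
      waterLevel V1 R D t ω i ≤ m i

/-- A dual variable `y = (γ_t, v_t, λ_t, w_t)_{t=1}^{T-1}` consists of integrable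
maps `Ω → ℝ^N` which are almost surely nonnegative componentwise. -/
def IsDualVariable {Ω : Type*} {N : ℕ} [MeasurableSpace Ω] (P : Measure Ω) (T : ℕ)
    (gam v lam w : ℕ → Ω → Fin N → ℝ) : Prop :=
  (∀ t, 1 ≤ t → t ≤ T - 1 → ∀ i,
    Integrable (fun ω => gam t ω i) P ∧ Integrable (fun ω => v t ω i) P ∧
    Integrable (fun ω => lam t ω i) P ∧ Integrable (fun ω => w t ω i) P) ∧
  (∀ᵐ ω ∂P, ∀ t, 1 ≤ t → t ≤ T - 1 → ∀ i,
    0 ≤ gam t ω i ∧ 0 ≤ v t ω i ∧ 0 ≤ lam t ω i ∧ 0 ≤ w t ω i)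

/-- Dual feasibility: for every `t = 1, …, T-1` and every `A ∈ G_t`,
`∫_A (S(t+1) - α S(T) + γ_t - v_t - ∑_{s=t}^{T-1} λ_s + ∑_{s=t+1}^{T-1} w_s) dP = 0`
in `ℝ^N`. -/
def DualFeasible {Ω : Type*} {N : ℕ} [MeasurableSpace Ω] (P : Measure Ω) (T : ℕ)
    (G : ℕ → MeasurableSpace Ω) (S : ℕ → Ω → Fin N → ℝ) (α : ℝ)
    (gam v lam w : ℕ → Ω → Fin N → ℝ) : Prop :=
  ∀ t, 1 ≤ t → t ≤ T - 1 → ∀ A : Set Ω, MeasurableSet[G t] A → ∀ i,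
    ∫ ω in A, (S (t + 1) ω i - α * S T ω i + gam t ω i - v t ω i
      - ∑ s ∈ Finset.Icc t (T - 1), lam s ω i
      + ∑ s ∈ Finset.Icc (t + 1) (T - 1), w s ω i) ∂P = 0

/-- The dual value
`Φ(y) = α E[S(T)·V(1) + ∑_{t=1}^{T-1} S(T)·R(t)]
  + ∑_{t=1}^{T-1} E[λ_t·(V(1) + ∑_{s=1}^{t-1} R(s)) + v_t·b
  + w_t·(m - V(1) - ∑_{s=1}^{t-1} R(s))]`. -/
def dualValue {Ω : Type*} {N : ℕ} [MeasurableSpace Ω] (P : Measure Ω) (T : ℕ)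
    (S R : ℕ → Ω → Fin N → ℝ) (V1 b m : Fin N → ℝ) (α : ℝ)
    (v lam w : ℕ → Ω → Fin N → ℝ) : ℝ :=
  α * ∫ ω, (∑ i, S T ω i * V1 i
      + ∑ t ∈ Finset.Ico 1 T, ∑ i, S T ω i * R t ω i) ∂P
  + ∑ t ∈ Finset.Ico 1 T, ∫ ω,
      (∑ i, lam t ω i * (V1 i + ∑ s ∈ Finset.Ico 1 t, R s ω i)
       + ∑ i, v t ω i * b i
       + ∑ i, w t ω i * (m i - V1 i - ∑ s ∈ Finset.Ico 1 t, R s ω i)) ∂P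

/-!
Pathwise, the revenue splits as `∑ₜ D(t)·φₜ + α S(T)·(V(1) + ∑ₜ R(t)) + ∑ₜ D(t)·ψₜ`, where `φₜ` is
the integrand of the dual feasibility condition and `ψₜ = vₜ - γₜ + ∑_{s ≥ t} λₛ - ∑_{s > t} wₛ`.
As `D(t)` is bounded and `G t`-measurable while `E[φₜ | G t] = 0`, the first sum has expectation
zero. Exchanging the order of summation in the last sum turns the tail sums of multipliers into
cumulative drains `∑_{s ≤ t} D(s)` and `∑_{s < t} D(s)`, which the constraints `D(t) ≤ V(t) ≤ m`
bound by `V(1) + ∑_{s < t} R(s)` and `m - V(1) - ∑_{s < t} R(s)`; with `0 ≤ D(t) ≤ b` and the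
signs of the multipliers, the last sum is at most the `λ`, `v`, `w` part of `Φ(y)`.
-/

open scoped ENNReal

theorem sum_Ico_mul_sum_Icc_add_comm {β : Type*} [CommSemiring β] (f g : ℕ → β) (T k : ℕ) :
    ∑ t ∈ Ico 1 T, f t * ∑ s ∈ Icc (t + k) (T - 1), g s
      = ∑ s ∈ Ico 1 T, g s * ∑ t ∈ Ico 1 (s + 1 - k), f t := by
  simp_rw [mul_sum]
  rw [sum_comm' (t' := Ico 1 T) (s' := fun s => Ico 1 (s + 1 - k))
    (fun t s => by simp only [mem_Ico, mem_Icc]; omega)]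
  exact sum_congr rfl fun s _ => sum_congr rfl fun t _ => mul_comm _ _

theorem drain_pairing_le (T : ℕ) (d r gam v lam w : ℕ → ℝ) (V1 b m : ℝ)
    (hd : ∀ t, 1 ≤ t → t ≤ T - 1 → 0 ≤ d t ∧ d t ≤ b ∧
      d t ≤ V1 + ∑ s ∈ Ico 1 t, (r s - d s) ∧ V1 + ∑ s ∈ Ico 1 t, (r s - d s) ≤ m)
    (hy : ∀ t, 1 ≤ t → t ≤ T - 1 → 0 ≤ gam t ∧ 0 ≤ v t ∧ 0 ≤ lam t ∧ 0 ≤ w t) :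
    ∑ t ∈ Ico 1 T, d t * (v t - gam t + ∑ s ∈ Icc t (T - 1), lam s
        - ∑ s ∈ Icc (t + 1) (T - 1), w s)
      ≤ ∑ t ∈ Ico 1 T, (lam t * (V1 + ∑ s ∈ Ico 1 t, r s) + v t * b
        + w t * (m - V1 - ∑ s ∈ Ico 1 t, r s)) := by
  have hswap : ∑ t ∈ Ico 1 T, d t * (v t - gam t + ∑ s ∈ Icc t (T - 1), lam s
        - ∑ s ∈ Icc (t + 1) (T - 1), w s)
      = ∑ t ∈ Ico 1 T, (d t * (v t - gam t) + lam t * ∑ s ∈ Ico 1 (t + 1), d s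
        - w t * ∑ s ∈ Ico 1 t, d s) := by
    have hlam := sum_Ico_mul_sum_Icc_add_comm d lam T 0
    have hw := sum_Ico_mul_sum_Icc_add_comm d w T 1
    simp only [add_zero, Nat.sub_zero, Nat.add_sub_cancel] at hlam hw
    simp only [mul_sub, mul_add, sum_sub_distrib, sum_add_distrib, hlam, hw]
  rw [hswap]
  refine sum_le_sum fun t ht => ?_
  obtain ⟨ht1, htT⟩ := mem_Ico.mp ht
  obtain ⟨hd0, hdb, hdV, hVm⟩ := hd t ht1 (by omega)
  obtain ⟨hgam, hv, hlam, hw⟩ := hy t ht1 (by omega)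
  rw [sum_sub_distrib] at hdV hVm
  rw [sum_Ico_succ_top ht1]
  nlinarith [mul_le_mul_of_nonneg_left hdb hv, mul_nonneg hd0 hgam,
    mul_le_mul_of_nonneg_left hdV hlam, mul_le_mul_of_nonneg_left hVm hw]

theorem pathwise_weak_duality (T : ℕ) (α V1 b m : ℝ) (d s r gam v lam w : ℕ → ℝ)
    (hd : ∀ t, 1 ≤ t → t ≤ T - 1 → 0 ≤ d t ∧ d t ≤ b ∧
      d t ≤ V1 + ∑ u ∈ Ico 1 t, (r u - d u) ∧ V1 + ∑ u ∈ Ico 1 t, (r u - d u) ≤ m)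
    (hy : ∀ t, 1 ≤ t → t ≤ T - 1 → 0 ≤ gam t ∧ 0 ≤ v t ∧ 0 ≤ lam t ∧ 0 ≤ w t) :
    ∑ t ∈ Ico 1 T, d t * s (t + 1) + α * (s T * (V1 + ∑ u ∈ Ico 1 T, (r u - d u)))
      ≤ ∑ t ∈ Ico 1 T, d t * (s (t + 1) - α * s T + gam t - v t
          - ∑ u ∈ Icc t (T - 1), lam u + ∑ u ∈ Icc (t + 1) (T - 1), w u)
        + (α * (s T * V1 + ∑ t ∈ Ico 1 T, s T * r t)
          + ∑ t ∈ Ico 1 T, (lam t * (V1 + ∑ u ∈ Ico 1 t, r u) + v t * b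
            + w t * (m - V1 - ∑ u ∈ Ico 1 t, r u))) := by
  have hpair := drain_pairing_le T d r gam v lam w V1 b m hd hy
  have hsplit : ∑ t ∈ Ico 1 T, d t * s (t + 1) + α * (s T * (V1 + ∑ u ∈ Ico 1 T, (r u - d u)))
      = ∑ t ∈ Ico 1 T, d t * (s (t + 1) - α * s T + gam t - v t
          - ∑ u ∈ Icc t (T - 1), lam u + ∑ u ∈ Icc (t + 1) (T - 1), w u)
        + α * (s T * V1 + ∑ t ∈ Ico 1 T, s T * r t)
        + ∑ t ∈ Ico 1 T, d t * (v t - gam t + ∑ u ∈ Icc t (T - 1), lam u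
          - ∑ u ∈ Icc (t + 1) (T - 1), w u) := by
    simp only [mul_add, mul_sub, sum_add_distrib, sum_sub_distrib, mul_sum]
    ring_nf
  linarith

theorem pathwise_weak_duality_pi {N : ℕ} (T : ℕ) (α : ℝ) (V1 b m : Fin N → ℝ)
    (d s r gam v lam w : ℕ → Fin N → ℝ)
    (hd : ∀ t, 1 ≤ t → t ≤ T - 1 → ∀ i, 0 ≤ d t i ∧ d t i ≤ b i ∧
      d t i ≤ V1 i + ∑ u ∈ Ico 1 t, (r u i - d u i) ∧
      V1 i + ∑ u ∈ Ico 1 t, (r u i - d u i) ≤ m i)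
    (hy : ∀ t, 1 ≤ t → t ≤ T - 1 → ∀ i,
      0 ≤ gam t i ∧ 0 ≤ v t i ∧ 0 ≤ lam t i ∧ 0 ≤ w t i) :
    ∑ t ∈ Ico 1 T, ∑ i, d t i * s (t + 1) i
        + α * ∑ i, s T i * (V1 i + ∑ u ∈ Ico 1 T, (r u i - d u i))
      ≤ ∑ t ∈ Ico 1 T, ∑ i, d t i * (s (t + 1) i - α * s T i + gam t i - v t i
          - ∑ u ∈ Icc t (T - 1), lam u i + ∑ u ∈ Icc (t + 1) (T - 1), w u i)
        + (α * (∑ i, s T i * V1 i + ∑ t ∈ Ico 1 T, ∑ i, s T i * r t i)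
          + ∑ t ∈ Ico 1 T, (∑ i, lam t i * (V1 i + ∑ u ∈ Ico 1 t, r u i) + ∑ i, v t i * b i
            + ∑ i, w t i * (m i - V1 i - ∑ u ∈ Ico 1 t, r u i))) := by
  have h := sum_le_sum fun i (_ : i ∈ univ) => pathwise_weak_duality T α (V1 i) (b i) (m i)
    (d · i) (s · i) (r · i) (gam · i) (v · i) (lam · i) (w · i)
    (fun t h1 h2 => hd t h1 h2 i) (fun t h1 h2 => hy t h1 h2 i)
  simp only [mul_add, sum_add_distrib, mul_sum] at h ⊢
  simp only [sum_comm (s := univ) (t := Ico 1 T)] at h ⊢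
  linarith

section MeasureTheory

variable {Ω : Type*} {mΩ : MeasurableSpace Ω} {P : Measure Ω}

theorem integral_mul_eq_zero_of_forall_setIntegral_eq_zero [IsFiniteMeasure P]
    {m : MeasurableSpace Ω} (hm : m ≤ mΩ) {f g : Ω → ℝ} (hg : StronglyMeasurable[m] g)
    (hg_top : MemLp g ∞ P) (hf : Integrable f P)
    (hf0 : ∀ A, MeasurableSet[m] A → ∫ ω in A, f ω ∂P = 0) :
    ∫ ω, g ω * f ω ∂P = 0 := by
  have hcond : 0 =ᵐ[P] P[f|m] :=
    ae_eq_condExp_of_forall_setIntegral_eq hm hf (fun _ _ _ => integrableOn_zero)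
      (fun A hA _ => by simp [hf0 A hA]) aestronglyMeasurable_const
  have hgf : Integrable (g * f) P := hf.mul_of_top_right hg_top
  calc ∫ ω, g ω * f ω ∂P = ∫ ω, P[g * f|m] ω ∂P := (integral_condExp hm).symm
    _ = ∫ ω, g ω * P[f|m] ω ∂P :=
      integral_congr_ae (condExp_mul_of_stronglyMeasurable_left hg hgf hf)
    _ = 0 := integral_eq_zero_of_ae (by filter_upwards [hcond] with ω hω; simp [← hω])

theorem memLp_top_apply_of_abs_le {N : ℕ} {f : Ω → Fin N → ℝ} (hf : Measurable f) {C : ℝ}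
    (hC : ∀ ω i, |f ω i| ≤ C) (i : Fin N) : MemLp (fun ω => f ω i) ∞ P :=
  memLp_top_of_bound ((measurable_pi_apply i).comp hf).aestronglyMeasurable C
    (ae_of_all _ fun ω => (Real.norm_eq_abs _).trans_le (hC ω i))

theorem integral_le_of_ae_le_add {F X Y : Ω → ℝ} (hF : Integrable F P) (hX : Integrable X P)
    (hX0 : ∫ ω, X ω ∂P = 0) (hY : Integrable Y P) (h : ∀ᵐ ω ∂P, F ω ≤ X ω + Y ω) :
    ∫ ω, F ω ∂P ≤ ∫ ω, Y ω ∂P :=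
  calc ∫ ω, F ω ∂P ≤ ∫ ω, X ω + Y ω ∂P := integral_mono_ae hF (hX.add hY) h
    _ = ∫ ω, Y ω ∂P := by rw [integral_add hX hY, hX0, zero_add]

end MeasureTheory

section Hydropower

variable {Ω : Type*} {mΩ : MeasurableSpace Ω} {P : Measure Ω} {N T : ℕ}
  {G : ℕ → MeasurableSpace Ω} {S R D gam v lam w : ℕ → Ω → Fin N → ℝ} {α : ℝ}

def dualResidual (T : ℕ) (S : ℕ → Ω → Fin N → ℝ) (α : ℝ) (gam v lam w : ℕ → Ω → Fin N → ℝ)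
    (t : ℕ) (ω : Ω) (i : Fin N) : ℝ :=
  S (t + 1) ω i - α * S T ω i + gam t ω i - v t ω i
    - ∑ s ∈ Icc t (T - 1), lam s ω i + ∑ s ∈ Icc (t + 1) (T - 1), w s ω i

def dualIntegrand (T : ℕ) (S R : ℕ → Ω → Fin N → ℝ) (V1 b m : Fin N → ℝ) (α : ℝ)
    (v lam w : ℕ → Ω → Fin N → ℝ) (ω : Ω) : ℝ :=
  α * (∑ i, S T ω i * V1 i + ∑ t ∈ Ico 1 T, ∑ i, S T ω i * R t ω i)
    + ∑ t ∈ Ico 1 T, (∑ i, lam t ω i * (V1 i + ∑ s ∈ Ico 1 t, R s ω i) + ∑ i, v t ω i * b i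
      + ∑ i, w t ω i * (m i - V1 i - ∑ s ∈ Ico 1 t, R s ω i))

theorem Admissible.memLp_top (hG_le : ∀ t, G t ≤ mΩ) (hD : Admissible T G D) {t : ℕ}
    (h1 : 1 ≤ t) (h2 : t ≤ T - 1) (i : Fin N) : MemLp (fun ω => D t ω i) ∞ P :=
  let ⟨hmeas, _, hC⟩ := hD t h1 h2
  memLp_top_apply_of_abs_le (hmeas.mono (hG_le t) le_rfl) hC i

theorem integrable_drain_mul_dualResidual
    (hD : ∀ t, 1 ≤ t → t ≤ T - 1 → ∀ i, MemLp (fun ω => D t ω i) ∞ P)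
    (hres : ∀ t, 1 ≤ t → t ≤ T - 1 → ∀ i,
      Integrable (fun ω => dualResidual T S α gam v lam w t ω i) P)
    {t : ℕ} (h1 : 1 ≤ t) (h2 : t ≤ T - 1) (i : Fin N) :
    Integrable (fun ω => D t ω i * dualResidual T S α gam v lam w t ω i) P :=
  (hres t h1 h2 i).mul_of_top_right (hD t h1 h2 i)

theorem integrable_sum_drain_mul_dualResidual
    (hD : ∀ t, 1 ≤ t → t ≤ T - 1 → ∀ i, MemLp (fun ω => D t ω i) ∞ P)
    (hres : ∀ t, 1 ≤ t → t ≤ T - 1 → ∀ i,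
      Integrable (fun ω => dualResidual T S α gam v lam w t ω i) P) :
    Integrable (fun ω => ∑ t ∈ Ico 1 T, ∑ i, D t ω i * dualResidual T S α gam v lam w t ω i) P :=
  integrable_finsetSum _ fun t ht => integrable_finsetSum _ fun i _ =>
    integrable_drain_mul_dualResidual hD hres (mem_Ico.mp ht).1 (by grind) i

variable [IsFiniteMeasure P]

theorem integrable_dualResidual (hT : 1 ≤ T)
    (hS : ∀ t, 1 ≤ t → t ≤ T → ∀ i, MemLp (fun ω => S t ω i) ∞ P)
    (hy : IsDualVariable P T gam v lam w) {t : ℕ} (h1 : 1 ≤ t) (h2 : t ≤ T - 1) (i : Fin N) :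
    Integrable (fun ω => dualResidual T S α gam v lam w t ω i) P := by
  have hlam : Integrable (fun ω => ∑ s ∈ Icc t (T - 1), lam s ω i) P :=
    integrable_finsetSum _ fun s hs => (hy.1 s (by grind) (mem_Icc.mp hs).2 i).2.2.1
  have hw : Integrable (fun ω => ∑ s ∈ Icc (t + 1) (T - 1), w s ω i) P :=
    integrable_finsetSum _ fun s hs => (hy.1 s (by grind) (mem_Icc.mp hs).2 i).2.2.2
  have hSt := (hS (t + 1) (by omega) (by omega) i).integrable le_top
  have hST := (hS T hT le_rfl i).integrable le_top
  obtain ⟨hgam, hv, -, -⟩ := hy.1 t h1 h2 i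
  unfold dualResidual
  fun_prop

theorem DualFeasible.integral_sum_drain_mul_dualResidual (hG_le : ∀ t, G t ≤ mΩ)
    (hy_feas : DualFeasible P T G S α gam v lam w) (hD_adm : Admissible T G D)
    (hres : ∀ t, 1 ≤ t → t ≤ T - 1 → ∀ i,
      Integrable (fun ω => dualResidual T S α gam v lam w t ω i) P) :
    ∫ ω, ∑ t ∈ Ico 1 T, ∑ i, D t ω i * dualResidual T S α gam v lam w t ω i ∂P = 0 := by
  have hD := fun t h1 h2 i => hD_adm.memLp_top (P := P) hG_le (t := t) h1 h2 i
  have hint := fun t => integrable_drain_mul_dualResidual (t := t) hD hres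
  rw [integral_finsetSum _ fun t ht => integrable_finsetSum _ fun i _ =>
    hint t (mem_Ico.mp ht).1 (by grind) i]
  refine sum_eq_zero fun t ht => ?_
  obtain ⟨h1, h2⟩ : 1 ≤ t ∧ t ≤ T - 1 := by grind
  rw [integral_finsetSum _ fun i _ => hint t h1 h2 i]
  exact sum_eq_zero fun i _ => integral_mul_eq_zero_of_forall_setIntegral_eq_zero (hG_le t)
    ((measurable_pi_apply i).comp (hD_adm t h1 h2).1).stronglyMeasurable (hD t h1 h2 i)
    (hres t h1 h2 i) fun A hA => hy_feas t h1 h2 A hA i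

theorem integrable_revenue_integrand (V1 : Fin N → ℝ) (α : ℝ) (hT : 1 ≤ T)
    (hS : ∀ t, 1 ≤ t → t ≤ T → ∀ i, MemLp (fun ω => S t ω i) ∞ P)
    (hR : ∀ t i, MemLp (fun ω => R t ω i) ∞ P)
    (hD : ∀ t, 1 ≤ t → t ≤ T - 1 → ∀ i, MemLp (fun ω => D t ω i) ∞ P) :
    Integrable (fun ω => ∑ t ∈ Ico 1 T, ∑ i, D t ω i * S (t + 1) ω i
      + α * ∑ i, S T ω i * waterLevel V1 R D T ω i) P := by
  have hV : ∀ i, MemLp (fun ω => waterLevel V1 R D T ω i) ∞ P := fun i =>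
    (memLp_const (V1 i)).add (memLp_finsetSum _ fun s hs =>
      (hR s i).sub (hD s (mem_Ico.mp hs).1 (by grind) i))
  refine MemLp.integrable le_top
    ((memLp_finsetSum _ fun t ht => memLp_finsetSum _ fun i _ => ?_).add
      ((memLp_finsetSum _ fun i _ => (hV i).mul' (hS T hT le_rfl i)).const_mul α))
  obtain ⟨h1, h2⟩ := mem_Ico.mp ht
  exact (hS (t + 1) (by omega) h2 i).mul' (hD t h1 (by omega) i)

theorem integrable_terminalInflowValue (V1 : Fin N → ℝ) (hS : ∀ i, MemLp (fun ω => S T ω i) ∞ P)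
    (hR : ∀ t i, MemLp (fun ω => R t ω i) ∞ P) :
    Integrable (fun ω => ∑ i, S T ω i * V1 i + ∑ t ∈ Ico 1 T, ∑ i, S T ω i * R t ω i) P :=
  MemLp.integrable le_top ((memLp_finsetSum _ fun i _ => (hS i).mul_const (V1 i)).add
    (memLp_finsetSum _ fun t _ => memLp_finsetSum _ fun i _ => (hR t i).mul' (hS i)))

theorem integrable_dualCost (V1 b m : Fin N → ℝ) (hR : ∀ t i, MemLp (fun ω => R t ω i) ∞ P)
    (hy : IsDualVariable P T gam v lam w) {t : ℕ} (h1 : 1 ≤ t) (h2 : t ≤ T - 1) :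
    Integrable (fun ω => ∑ i, lam t ω i * (V1 i + ∑ s ∈ Ico 1 t, R s ω i) + ∑ i, v t ω i * b i
      + ∑ i, w t ω i * (m i - V1 i - ∑ s ∈ Ico 1 t, R s ω i)) P := by
  have hR' : ∀ i, MemLp (fun ω => ∑ s ∈ Ico 1 t, R s ω i) ∞ P := fun i =>
    memLp_finsetSum _ fun s _ => hR s i
  refine ((integrable_finsetSum _ fun i _ => ?_).add
    (integrable_finsetSum _ fun i _ => (hy.1 t h1 h2 i).2.1.mul_const (b i))).add
    (integrable_finsetSum _ fun i _ => ?_)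
  · exact (hy.1 t h1 h2 i).2.2.1.mul_of_top_left ((memLp_const (V1 i)).add (hR' i))
  · exact (hy.1 t h1 h2 i).2.2.2.mul_of_top_left ((memLp_const (m i - V1 i)).sub (hR' i))

theorem integrable_dualIntegrand (V1 b m : Fin N → ℝ) (α : ℝ)
    (hS : ∀ i, MemLp (fun ω => S T ω i) ∞ P) (hR : ∀ t i, MemLp (fun ω => R t ω i) ∞ P)
    (hy : IsDualVariable P T gam v lam w) :
    Integrable (dualIntegrand T S R V1 b m α v lam w) P :=
  ((integrable_terminalInflowValue V1 hS hR).const_mul α).add (integrable_finsetSum _ fun t ht =>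
    integrable_dualCost V1 b m hR hy (mem_Ico.mp ht).1 (by grind))

theorem integral_dualIntegrand (V1 b m : Fin N → ℝ) (α : ℝ)
    (hS : ∀ i, MemLp (fun ω => S T ω i) ∞ P) (hR : ∀ t i, MemLp (fun ω => R t ω i) ∞ P)
    (hy : IsDualVariable P T gam v lam w) :
    ∫ ω, dualIntegrand T S R V1 b m α v lam w ω ∂P = dualValue P T S R V1 b m α v lam w := by
  have hcost : ∀ t ∈ Ico 1 T, Integrable (fun ω => ∑ i, lam t ω i * (V1 i + ∑ s ∈ Ico 1 t, R s ω i)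
      + ∑ i, v t ω i * b i + ∑ i, w t ω i * (m i - V1 i - ∑ s ∈ Ico 1 t, R s ω i)) P :=
    fun t ht => integrable_dualCost V1 b m hR hy (mem_Ico.mp ht).1 (by grind)
  unfold dualIntegrand
  rw [integral_add ((integrable_terminalInflowValue V1 hS hR).const_mul α)
    (integrable_finsetSum _ hcost), integral_const_mul, integral_finsetSum _ hcost]
  rfl

end Hydropower

theorem weak_duality_general {Ω : Type*} {mΩ : MeasurableSpace Ω}
    (P : Measure Ω) [IsProbabilityMeasure P]
    (T N : ℕ) (hT : 2 ≤ T)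
    (G : ℕ → MeasurableSpace Ω)
    (hG_le : ∀ t, G t ≤ mΩ)
    (S R : ℕ → Ω → Fin N → ℝ)
    (hS_adapted : ∀ t, 1 ≤ t → t ≤ T → Measurable[G t] (S t))
    (hS_bdd : ∃ C : ℝ, ∀ t ω i, |S t ω i| ≤ C)
    (hR_meas : ∀ t, Measurable (R t))
    (hR_bdd : ∃ C : ℝ, ∀ t ω i, |R t ω i| ≤ C)
    (V1 b m : Fin N → ℝ) (α : ℝ)
    (D : ℕ → Ω → Fin N → ℝ)
    (hD_adm : Admissible T G D)
    (hD_feas : FeasibleDrain P T R V1 b m D)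
    (gam v lam w : ℕ → Ω → Fin N → ℝ)
    (hy : IsDualVariable P T gam v lam w)
    (hy_feas : DualFeasible P T G S α gam v lam w) :
    revenue P T S R V1 α D ≤ dualValue P T S R V1 b m α v lam w := by
  obtain ⟨CS, hCS⟩ := hS_bdd
  obtain ⟨CR, hCR⟩ := hR_bdd
  have hS t (h1 : 1 ≤ t) (h2 : t ≤ T) i : MemLp (fun ω => S t ω i) ∞ P :=
    memLp_top_apply_of_abs_le ((hS_adapted t h1 h2).mono (hG_le t) le_rfl) (hCS t) i
  have hR t i : MemLp (fun ω => R t ω i) ∞ P := memLp_top_apply_of_abs_le (hR_meas t) (hCR t) i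
  have hD t (h1 : 1 ≤ t) (h2 : t ≤ T - 1) i : MemLp (fun ω => D t ω i) ∞ P :=
    hD_adm.memLp_top hG_le h1 h2 i
  have hres t (h1 : 1 ≤ t) (h2 : t ≤ T - 1) i :=
    integrable_dualResidual (α := α) (by omega) hS hy h1 h2 i
  have hpath := (hD_feas.and hy.2).mono fun ω h =>
    pathwise_weak_duality_pi T α V1 b m (D · ω) (S · ω) (R · ω) (gam · ω) (v · ω) (lam · ω)
      (w · ω) h.1 h.2
  exact (integral_le_of_ae_le_add (integrable_revenue_integrand V1 α (by omega) hS hR hD)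
    (integrable_sum_drain_mul_dualResidual hD hres)
    (hy_feas.integral_sum_drain_mul_dualResidual hG_le hD_adm hres)
    (integrable_dualIntegrand V1 b m α (hS T (by omega) le_rfl) hR hy) hpath).trans_eq
    (integral_dualIntegrand V1 b m α (hS T (by omega) le_rfl) hR hy)

/-- **Weak duality for the hydropower problem**: if `D` is an admissible feasible
drain process and `y = (γ, v, λ, w)` is a dual feasible variable, then
`J(D) ≤ Φ(y)`. -/
theorem weak_duality {Ω : Type*} {mΩ : MeasurableSpace Ω}
    (P : Measure Ω) [IsProbabilityMeasure P]
    (T N : ℕ) (hT : 2 ≤ T) (hN : 1 ≤ N)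
    (G : ℕ → MeasurableSpace Ω)
    (hG_mono : ∀ s t, s ≤ t → G s ≤ G t) (hG_le : ∀ t, G t ≤ mΩ)
    (S R : ℕ → Ω → Fin N → ℝ)
    (hS_adapted : ∀ t, 1 ≤ t → t ≤ T → Measurable[G t] (S t))
    (hS_bdd : ∃ C : ℝ, ∀ t ω i, |S t ω i| ≤ C)
    (hR_meas : ∀ t, Measurable (R t))
    (hR_bdd : ∃ C : ℝ, ∀ t ω i, |R t ω i| ≤ C)
    (V1 b m : Fin N → ℝ) (α : ℝ)
    (D : ℕ → Ω → Fin N → ℝ)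
    (hD_adm : Admissible T G D)
    (hD_feas : FeasibleDrain P T R V1 b m D)
    (gam v lam w : ℕ → Ω → Fin N → ℝ)
    (hy : IsDualVariable P T gam v lam w)
    (hy_feas : DualFeasible P T G S α gam v lam w) :
    revenue P T S R V1 α D ≤ dualValue P T S R V1 b m α v lam w :=
  weak_duality_general P T N hT G hG_le S R hS_adapted hS_bdd hR_meas hR_bdd V1 b m α D hD_adm
    hD_feas gam v lam w hy hy_feas
end
end

section
/- Suppose α = 1 and each coordinate process (S_i(t))_{t=1}^{T}, i = 1,…,N, is a martingale with respect to the filtration (G_t) and P. Then every admissible drain process D (feasible or not) has the same expected revenue: J(D) = E[S(T)·V(1) + Σ_{t=1}^{T−1} S(T)·R(t)]. In particular, in the martingale case the expected revenue does not depend on the drain strategy. -/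
/-!
Write `V(T) = V(1) + ∑ R(t) - ∑ D(t)`. With `α = 1` the revenue then differs from the claimed
value by `E[∑_t D(t)·(S(t+1) - S(T))]`. Each term vanishes: `D(t)` is `G_t`-measurable and
bounded, so it can be pulled out of `E[· | G_t]`, and `E[S(t+1) - S(T) | G_t] = S(t) - S(t) = 0`
by the martingale property.
-/

open MeasureTheory Finset

noncomputable section

namespace MeasureTheory

variable {Ω : Type*} {m mΩ : MeasurableSpace Ω} {μ : Measure Ω}

/-- Holds also when `f` is not integrable, both sides being `0` then. -/
theorem integral_add_eq_integral_left {f g : Ω → ℝ} (hg : Integrable g μ)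
    (hg_zero : ∫ ω, g ω ∂μ = 0) : ∫ ω, (f ω + g ω) ∂μ = ∫ ω, f ω ∂μ := by
  by_cases hf : Integrable f μ
  · rw [integral_add hf hg, hg_zero, add_zero]
  · rw [integral_undef hf, integral_undef ((integrable_add_iff_integrable_left' hg).not.mpr hf)]

theorem integral_mul_eq_zero_of_condExp_ae_eq_zero [IsFiniteMeasure μ] (hm : m ≤ mΩ)
    {f g : Ω → ℝ} (hf : StronglyMeasurable[m] f) {C : ℝ} (hf_bound : ∀ᵐ ω ∂μ, ‖f ω‖ ≤ C)
    (hg : Integrable g μ) (hg_zero : μ[g | m] =ᵐ[μ] 0) : ∫ ω, f ω * g ω ∂μ = 0 :=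
  calc ∫ ω, f ω * g ω ∂μ = ∫ ω, (μ[f * g | m]) ω ∂μ := (integral_condExp hm).symm
    _ = ∫ ω, f ω * (μ[g | m]) ω ∂μ :=
      integral_congr_ae (condExp_stronglyMeasurable_mul_of_bound hm hf hg C hf_bound)
    _ = 0 := by
      rw [integral_congr_ae (hg_zero.mono fun ω hω => by rw [hω, Pi.zero_apply, mul_zero]),
        integral_zero]

end MeasureTheory

theorem revenue_one_eq {Ω : Type*} {N : ℕ} [MeasurableSpace Ω] (P : Measure Ω) (T : ℕ)
    (S R : ℕ → Ω → Fin N → ℝ) (V1 : Fin N → ℝ) (D : ℕ → Ω → Fin N → ℝ) :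
    revenue P T S R V1 1 D
      = ∫ ω, ((∑ i, S T ω i * V1 i + ∑ t ∈ Ico 1 T, ∑ i, S T ω i * R t ω i)
          + ∑ t ∈ Ico 1 T, ∑ i, D t ω i * (S (t + 1) ω i - S T ω i)) ∂P := by
  refine integral_congr_ae (Filter.Eventually.of_forall fun ω => ?_)
  simp only [waterLevel, one_mul, mul_add, mul_sum, mul_sub, sum_add_distrib, sum_sub_distrib]
  rw [sum_comm (s := univ) (t := Ico 1 T), sum_comm (s := univ) (t := Ico 1 T)]
  simp only [mul_comm (S T _ _) (D _ _ _)]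
  ring

section Drain

variable {Ω : Type*} {mΩ : MeasurableSpace Ω} {P : Measure Ω} [IsFiniteMeasure P] {T N : ℕ}
  {G : ℕ → MeasurableSpace Ω} {S D : ℕ → Ω → Fin N → ℝ}

theorem drain_mul_price_increment_integrable_and_integral_eq_zero (hG_le : ∀ t, G t ≤ mΩ)
    (hmart : ∀ s t, 1 ≤ s → s ≤ t → t ≤ T → ∀ i,
      P[(fun ω => S t ω i)|G s] =ᵐ[P] fun ω => S s ω i)
    (hD_adm : Admissible T G D) {t : ℕ} (ht : t ∈ Ico 1 T) (i : Fin N) :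
    Integrable (fun ω => D t ω i * (S (t + 1) ω i - S T ω i)) P
      ∧ ∫ ω, D t ω i * (S (t + 1) ω i - S T ω i) ∂P = 0 := by
  obtain ⟨ht1, htT⟩ := mem_Ico.mp ht
  obtain ⟨hD_meas, C, hD_bound⟩ := hD_adm t ht1 (by omega)
  have hf : StronglyMeasurable[G t] fun ω => D t ω i :=
    ((measurable_pi_apply i).comp hD_meas).stronglyMeasurable
  have hf_bound : ∀ᵐ ω ∂P, ‖D t ω i‖ ≤ C := ae_of_all _ fun ω => hD_bound ω i
  -- a martingale is integrable, being a version of a conditional expectation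
  have hS_succ_int : Integrable (fun ω => S (t + 1) ω i) P :=
    integrable_condExp.congr (hmart (t + 1) T (by omega) htT le_rfl i)
  have hS_T_int : Integrable (fun ω => S T ω i) P :=
    integrable_condExp.congr (hmart T T (by omega) le_rfl le_rfl i)
  have hg_zero : P[fun ω => S (t + 1) ω i - S T ω i | G t] =ᵐ[P] 0 := by
    filter_upwards [condExp_sub hS_succ_int hS_T_int (G t), hmart t (t + 1) ht1 (by omega) htT i,
      hmart t T ht1 htT.le le_rfl i] with ω h_sub h_succ h_T
    rw [Pi.zero_apply, ← sub_self (S t ω i)]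
    exact h_sub.trans (by rw [Pi.sub_apply, h_succ, h_T])
  exact ⟨(hS_succ_int.sub hS_T_int).bdd_mul (hf.mono (hG_le t)).aestronglyMeasurable hf_bound,
    integral_mul_eq_zero_of_condExp_ae_eq_zero (hG_le t) hf hf_bound
      (hS_succ_int.sub hS_T_int) hg_zero⟩

end Drain

theorem revenue_eq_of_martingale_general {Ω : Type*} {mΩ : MeasurableSpace Ω}
    (P : Measure Ω) [IsProbabilityMeasure P]
    (T N : ℕ)
    (G : ℕ → MeasurableSpace Ω)
    (hG_le : ∀ t, G t ≤ mΩ)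
    (S R : ℕ → Ω → Fin N → ℝ)
    (V1 : Fin N → ℝ) (α : ℝ) (hα : α = 1)
    (hmart : ∀ s t, 1 ≤ s → s ≤ t → t ≤ T → ∀ i,
      P[(fun ω => S t ω i)|G s] =ᵐ[P] fun ω => S s ω i)
    (D : ℕ → Ω → Fin N → ℝ) (hD_adm : Admissible T G D) :
    revenue P T S R V1 α D
      = ∫ ω, (∑ i, S T ω i * V1 i
          + ∑ t ∈ Finset.Ico 1 T, ∑ i, S T ω i * R t ω i) ∂P := by
  subst hα
  have hterm := fun t (ht : t ∈ Ico 1 T) i =>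
    drain_mul_price_increment_integrable_and_integral_eq_zero hG_le hmart hD_adm ht i
  have hterm_int : ∀ t ∈ Ico 1 T,
      Integrable (fun ω => ∑ i, D t ω i * (S (t + 1) ω i - S T ω i)) P :=
    fun t ht => integrable_finsetSum _ fun i _ => (hterm t ht i).1
  rw [revenue_one_eq]
  refine integral_add_eq_integral_left (integrable_finsetSum _ hterm_int) ?_
  rw [integral_finsetSum _ hterm_int]
  refine sum_eq_zero fun t ht => ?_
  rw [integral_finsetSum _ fun i _ => (hterm t ht i).1]
  exact sum_eq_zero fun i _ => (hterm t ht i).2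

/-- **Martingale case: the expected revenue does not depend on the drain strategy.**
If `α = 1` and each coordinate of the price process is a martingale w.r.t. the
manager's filtration `(G_t)`, then every admissible drain process `D` has the same
expected revenue `J(D) = E[S(T)·V(1) + ∑_{t=1}^{T-1} S(T)·R(t)]`. -/
theorem revenue_eq_of_martingale {Ω : Type*} {mΩ : MeasurableSpace Ω}
    (P : Measure Ω) [IsProbabilityMeasure P]
    (T N : ℕ) (hT : 2 ≤ T) (hN : 1 ≤ N)
    (G : ℕ → MeasurableSpace Ω)
    (hG_mono : ∀ s t, s ≤ t → G s ≤ G t) (hG_le : ∀ t, G t ≤ mΩ)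
    (S R : ℕ → Ω → Fin N → ℝ)
    (hS_adapted : ∀ t, 1 ≤ t → t ≤ T → Measurable[G t] (S t))
    (hS_bdd : ∃ C : ℝ, ∀ t ω i, |S t ω i| ≤ C)
    (hR_meas : ∀ t, Measurable (R t))
    (hR_bdd : ∃ C : ℝ, ∀ t ω i, |R t ω i| ≤ C)
    (V1 : Fin N → ℝ) (α : ℝ) (hα : α = 1)
    (hmart : ∀ s t, 1 ≤ s → s ≤ t → t ≤ T → ∀ i,
      P[(fun ω => S t ω i)|G s] =ᵐ[P] fun ω => S s ω i)
    (D : ℕ → Ω → Fin N → ℝ) (hD_adm : Admissible T G D) :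
    revenue P T S R V1 α D
      = ∫ ω, (∑ i, S T ω i * V1 i
          + ∑ t ∈ Finset.Ico 1 T, ∑ i, S T ω i * R t ω i) ∂P :=
  revenue_eq_of_martingale_general P T N G hG_le S R V1 α hα hmart D hD_adm
end
end

section
/- Suppose α = 1 and each coordinate process (S_i(t))_{t=1}^{T}, i = 1,…,N, is a submartingale with respect to the filtration (G_t) and P. Then for every admissible drain process D with D(t) ≥ 0 componentwise almost surely for all t = 1,…,T−1, the expected revenue is bounded above by the value of the water in the system: J(D) ≤ E[S(T)·V(1) + Σ_{t=1}^{T−1} S(T)·R(t)]. -/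
open MeasureTheory Finset

noncomputable section

/-!
With `α = 1` the water left at time `T` is valued at `S(T)`, so the revenue equals the value
`E[S(T)·(V(1) + ∑ R(t))]` minus, for every drained unit, the gain `E[D(t)·(S(T) - S(t+1))]`
forgone by selling it at `S(t+1)` instead. Since `D(t) ≥ 0` is `G_{t+1}`-measurable, pulling it
out of the conditional expectation and the submartingale inequality `S(t+1) ≤ E[S(T) | G_{t+1}]`
make each of these gains nonnegative.
-/

open scoped ENNReal

theorem integral_mul_le_integral_mul_of_le_condExp {Ω : Type*} {m mΩ : MeasurableSpace Ω}
    {P : Measure Ω} (hm : m ≤ mΩ) [SigmaFinite (P.trim hm)] {f g h : Ω → ℝ}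
    (hf : StronglyMeasurable[m] f) (hf_bdd : MemLp f ∞ P) (hf_nonneg : 0 ≤ᵐ[P] f)
    (hg : Integrable g P) (hh : Integrable h P) (hgh : g ≤ᵐ[P] P[h|m]) :
    ∫ ω, f ω * g ω ∂P ≤ ∫ ω, f ω * h ω ∂P :=
  calc ∫ ω, f ω * g ω ∂P
      ≤ ∫ ω, f ω * P[h|m] ω ∂P := by
        refine integral_mono_ae (hg.mul_of_top_right hf_bdd)
          (integrable_condExp.mul_of_top_right hf_bdd) ?_
        filter_upwards [hf_nonneg, hgh] with ω hfω hgω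
        exact mul_le_mul_of_nonneg_left hgω hfω
    _ = ∫ ω, P[f * h|m] ω ∂P :=
        integral_congr_ae
          (condExp_mul_of_stronglyMeasurable_left hf (hh.mul_of_top_right hf_bdd) hh).symm
    _ = ∫ ω, f ω * h ω ∂P := integral_condExp hm

theorem sum_mul_waterLevel {Ω : Type*} {N : ℕ} (p V1 : Fin N → ℝ) (R D : ℕ → Ω → Fin N → ℝ)
    (T : ℕ) (ω : Ω) :
    ∑ i, p i * waterLevel V1 R D T ω i
      = ∑ i, p i * V1 i + ∑ t ∈ Ico 1 T, ∑ i, p i * R t ω i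
        - ∑ t ∈ Ico 1 T, ∑ i, D t ω i * p i := by
  simp only [waterLevel, mul_add, mul_sum, mul_sub, sum_add_distrib, sum_sub_distrib]
  rw [sum_comm (f := fun i t => p i * R t ω i), sum_comm (f := fun i t => p i * D t ω i)]
  simp only [mul_comm (p _) (D _ _ _)]
  ring

theorem revenue_one_eq_value_sub_sum {Ω : Type*} {N : ℕ} {mΩ : MeasurableSpace Ω}
    (P : Measure Ω) (T : ℕ) (S R : ℕ → Ω → Fin N → ℝ) (V1 : Fin N → ℝ) (D : ℕ → Ω → Fin N → ℝ)
    (hDS : ∀ t ∈ Ico 1 T, ∀ i, Integrable (fun ω => D t ω i * S (t + 1) ω i) P)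
    (hDST : ∀ t ∈ Ico 1 T, ∀ i, Integrable (fun ω => D t ω i * S T ω i) P)
    (hvalue : Integrable (fun ω => ∑ i, S T ω i * V1 i
      + ∑ t ∈ Ico 1 T, ∑ i, S T ω i * R t ω i) P) :
    revenue P T S R V1 1 D
      = ∫ ω, (∑ i, S T ω i * V1 i + ∑ t ∈ Ico 1 T, ∑ i, S T ω i * R t ω i) ∂P
        - ∑ t ∈ Ico 1 T, ∑ i,
            (∫ ω, D t ω i * S T ω i ∂P - ∫ ω, D t ω i * S (t + 1) ω i ∂P) := by
  have hgap : ∀ t ∈ Ico 1 T, ∀ i,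
      Integrable (fun ω => D t ω i * S T ω i - D t ω i * S (t + 1) ω i) P :=
    fun t ht i => (hDST t ht i).sub (hDS t ht i)
  calc revenue P T S R V1 1 D
      = ∫ ω, ((∑ i, S T ω i * V1 i + ∑ t ∈ Ico 1 T, ∑ i, S T ω i * R t ω i)
          - ∑ t ∈ Ico 1 T, ∑ i, (D t ω i * S T ω i - D t ω i * S (t + 1) ω i)) ∂P := by
        refine integral_congr_ae (Filter.Eventually.of_forall fun ω => ?_)
        simp only [one_mul, sum_mul_waterLevel, sum_sub_distrib]
        ring
    _ = _ := by
        rw [integral_sub hvalue (integrable_finsetSum _ fun t ht =>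
          integrable_finsetSum _ fun i _ => hgap t ht i), integral_finsetSum _ fun t ht =>
          integrable_finsetSum _ fun i _ => hgap t ht i]
        refine congrArg _ (sum_congr rfl fun t ht => ?_)
        rw [integral_finsetSum _ fun i _ => hgap t ht i]
        exact sum_congr rfl fun i _ => integral_sub (hDST t ht i) (hDS t ht i)

theorem revenue_le_of_submartingale_general {Ω : Type*} {mΩ : MeasurableSpace Ω}
    (P : Measure Ω) [IsProbabilityMeasure P]
    (T N : ℕ) (hT : 2 ≤ T)
    (G : ℕ → MeasurableSpace Ω)
    (hG_mono : ∀ s t, s ≤ t → G s ≤ G t) (hG_le : ∀ t, G t ≤ mΩ)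
    (S R : ℕ → Ω → Fin N → ℝ)
    (hS_adapted : ∀ t, 1 ≤ t → t ≤ T → Measurable[G t] (S t))
    (hS_bdd : ∃ C : ℝ, ∀ t ω i, |S t ω i| ≤ C)
    (hR_meas : ∀ t, Measurable (R t))
    (hR_bdd : ∃ C : ℝ, ∀ t ω i, |R t ω i| ≤ C)
    (V1 : Fin N → ℝ) (α : ℝ) (hα : α = 1)
    (hsubmart : ∀ s t, 1 ≤ s → s ≤ t → t ≤ T → ∀ i,
      (fun ω => S s ω i) ≤ᵐ[P] P[(fun ω => S t ω i)|G s])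
    (D : ℕ → Ω → Fin N → ℝ) (hD_adm : Admissible T G D)
    (hD_nonneg : ∀ᵐ ω ∂P, ∀ t, 1 ≤ t → t ≤ T - 1 → ∀ i, 0 ≤ D t ω i) :
    revenue P T S R V1 α D
      ≤ ∫ ω, (∑ i, S T ω i * V1 i
          + ∑ t ∈ Finset.Ico 1 T, ∑ i, S T ω i * R t ω i) ∂P := by
  subst hα
  obtain ⟨CS, hCS⟩ := hS_bdd
  obtain ⟨CR, hCR⟩ := hR_bdd
  have hS : ∀ t, 1 ≤ t → t ≤ T → ∀ i, MemLp (fun ω => S t ω i) ∞ P := fun t h1 h2 i =>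
    memLp_top_of_bound ((measurable_pi_apply i).comp
      ((hS_adapted t h1 h2).mono (hG_le t) le_rfl)).aestronglyMeasurable CS
      (ae_of_all _ fun ω => hCS t ω i)
  have hR : ∀ t i, MemLp (fun ω => R t ω i) ∞ P := fun t i =>
    memLp_top_of_bound ((measurable_pi_apply i).comp (hR_meas t)).aestronglyMeasurable CR
      (ae_of_all _ fun ω => hCR t ω i)
  have hD : ∀ t ∈ Ico 1 T, ∀ i, StronglyMeasurable[G (t + 1)] (fun ω => D t ω i)
      ∧ MemLp (fun ω => D t ω i) ∞ P := by
    intro t ht i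
    obtain ⟨hDt, CD, hCD⟩ := hD_adm t (mem_Ico.1 ht).1 (by grind)
    have hDt_next : StronglyMeasurable[G (t + 1)] (fun ω => D t ω i) :=
      ((measurable_pi_apply i).comp
        (hDt.mono (hG_mono t (t + 1) t.le_succ) le_rfl)).stronglyMeasurable
    exact ⟨hDt_next, memLp_top_of_bound (hDt_next.mono (hG_le _)).aestronglyMeasurable CD
      (ae_of_all _ fun ω => hCD ω i)⟩
  have hST : ∀ i, Integrable (fun ω => S T ω i) P := fun i =>
    (hS T (by omega) le_rfl i).integrable le_top
  rw [revenue_one_eq_value_sub_sum P T S R V1 D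
    (fun t ht i => ((hS (t + 1) (by grind) (by grind) i).integrable le_top).mul_of_top_right
      (hD t ht i).2)
    (fun t ht i => (hST i).mul_of_top_right (hD t ht i).2)
    ((integrable_finsetSum _ fun i _ => (hST i).mul_const _).add
      (integrable_finsetSum _ fun t _ => integrable_finsetSum _ fun i _ =>
        ((hR t i).integrable le_top).mul_of_top_right (hS T (by omega) le_rfl i)))]
  refine sub_le_self _ (sum_nonneg fun t ht => sum_nonneg fun i _ => sub_nonneg.2 ?_)
  obtain ⟨ht1, htT⟩ := mem_Ico.1 ht
  exact integral_mul_le_integral_mul_of_le_condExp (hG_le (t + 1)) (hD t ht i).1 (hD t ht i).2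
    (hD_nonneg.mono fun ω hω => hω t ht1 (by omega) i)
    ((hS (t + 1) (by omega) (by omega) i).integrable le_top) (hST i)
    (hsubmart (t + 1) T (by omega) (by omega) le_rfl i)

/-- **Submartingale case: upper bound on the expected revenue.**
If `α = 1` and each coordinate of the price process is a submartingale w.r.t. the
manager's filtration `(G_t)`, then every admissible nonnegative drain process `D`
satisfies `J(D) ≤ E[S(T)·V(1) + ∑_{t=1}^{T-1} S(T)·R(t)]`. -/
theorem revenue_le_of_submartingale {Ω : Type*} {mΩ : MeasurableSpace Ω}
    (P : Measure Ω) [IsProbabilityMeasure P]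
    (T N : ℕ) (hT : 2 ≤ T) (hN : 1 ≤ N)
    (G : ℕ → MeasurableSpace Ω)
    (hG_mono : ∀ s t, s ≤ t → G s ≤ G t) (hG_le : ∀ t, G t ≤ mΩ)
    (S R : ℕ → Ω → Fin N → ℝ)
    (hS_adapted : ∀ t, 1 ≤ t → t ≤ T → Measurable[G t] (S t))
    (hS_bdd : ∃ C : ℝ, ∀ t ω i, |S t ω i| ≤ C)
    (hR_meas : ∀ t, Measurable (R t))
    (hR_bdd : ∃ C : ℝ, ∀ t ω i, |R t ω i| ≤ C)
    (V1 : Fin N → ℝ) (α : ℝ) (hα : α = 1)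
    (hsubmart : ∀ s t, 1 ≤ s → s ≤ t → t ≤ T → ∀ i,
      (fun ω => S s ω i) ≤ᵐ[P] P[(fun ω => S t ω i)|G s])
    (D : ℕ → Ω → Fin N → ℝ) (hD_adm : Admissible T G D)
    (hD_nonneg : ∀ᵐ ω ∂P, ∀ t, 1 ≤ t → t ≤ T - 1 → ∀ i, 0 ≤ D t ω i) :
    revenue P T S R V1 α D
      ≤ ∫ ω, (∑ i, S T ω i * V1 i
          + ∑ t ∈ Finset.Ico 1 T, ∑ i, S T ω i * R t ω i) ∂P :=
  revenue_le_of_submartingale_general P T N hT G hG_mono hG_le S R hS_adapted hS_bdd hR_meas hR_bdd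
    V1 α hα hsubmart D hD_adm hD_nonneg
end
end

section
/- Solution of the dual problem in the martingale case: suppose α = 1, each coordinate process (S_i(t))_{t=1}^{T} is a martingale with respect to (G_t) and P, V(1) ≥ 0 and b ≥ 0 componentwise, R(t) ≥ 0 componentwise almost surely for all t, and m − V(1) − Σ_{s=1}^{t−1} R(s) ≥ 0 componentwise almost surely for all t = 1,…,T−1. Then the zero dual variable y = 0 is dual feasible with Φ(0) = E[S(T)·V(1) + Σ_{t=1}^{T−1} S(T)·R(t)], and every dual feasible variable y satisfies Φ(y) ≥ E[S(T)·V(1) + Σ_{t=1}^{T−1} S(T)·R(t)]; hence the optimal dual value is d* = E[S(T)·V(1) + Σ_{t=1}^{T−1} S(T)·R(t)], attained at y = 0. -/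
/-!
Under the martingale property `∫_A S(u) dP = ∫_A S(t) dP` for every `A ∈ G_t` and `u ≥ t`, so the
constraint of the zero dual variable, `∫_A (S(t+1) - S(T)) dP = 0`, holds. For `α = 1` the dual
objective is `d*` plus expectations of products of the nonnegative dual variables with the
nonnegative quantities `V(1) + ∑ R`, `b` and `m - V(1) - ∑ R`, hence `Φ(y) ≥ d* = Φ(0)`.
-/

open MeasureTheory Finset

noncomputable section

theorem setIntegral_eq_of_condExp_ae_eq {Ω E : Type*} [NormedAddCommGroup E] [NormedSpace ℝ E]
    [CompleteSpace E] {m m₀ : MeasurableSpace Ω} {μ : Measure Ω} {f g : Ω → E} (hm : m ≤ m₀) [SigmaFinite (μ.trim hm)] (hf : Integrable f μ)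
    (hfg : μ[f|m] =ᵐ[μ] g) {s : Set Ω} (hs : MeasurableSet[m] s) :
    ∫ x in s, f x ∂μ = ∫ x in s, g x ∂μ := by
  rw [← setIntegral_condExp hm hf hs]
  exact setIntegral_congr_ae (hm s hs) (hfg.mono fun x hx _ => hx)

section DualProblem

variable {Ω : Type*} {mΩ : MeasurableSpace Ω} (P : Measure Ω) (T : ℕ) {N : ℕ}
  (S R : ℕ → Ω → Fin N → ℝ) (V1 b m : Fin N → ℝ) (α : ℝ)

theorem dualFeasible_zero_of_martingale [IsFiniteMeasure P] (G : ℕ → MeasurableSpace Ω)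
    (hG_le : ∀ t, G t ≤ mΩ) (hα : α = 1)
    (hmart : ∀ s t, 1 ≤ s → s ≤ t → t ≤ T → ∀ i,
      P[(fun ω => S t ω i)|G s] =ᵐ[P] fun ω => S s ω i) :
    DualFeasible P T G S α
      (fun _ _ _ => 0) (fun _ _ _ => 0) (fun _ _ _ => 0) (fun _ _ _ => 0) := by
  intro t ht1 htT A hA i
  have hS_int : ∀ u, 1 ≤ u → u ≤ T → Integrable (fun ω => S u ω i) P := fun u hu1 huT =>
    integrable_condExp.congr (hmart u u hu1 le_rfl huT i)
  have hS_setIntegral : ∀ u, t ≤ u → u ≤ T → ∫ ω in A, S u ω i ∂P = ∫ ω in A, S t ω i ∂P :=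
    fun u htu huT =>
      setIntegral_eq_of_condExp_ae_eq (hG_le t) (hS_int u (by omega) huT)
        (hmart t u ht1 htu huT i) hA
  simp only [hα, one_mul, sum_const_zero, add_zero, sub_zero]
  rw [integral_sub (hS_int (t + 1) (by omega) (by omega)).integrableOn
      (hS_int T (by omega) le_rfl).integrableOn,
    hS_setIntegral (t + 1) (by omega) (by omega), hS_setIntegral T (by omega) le_rfl, sub_self]

theorem dualValue_zero :
    dualValue P T S R V1 b m α (fun _ _ _ => 0) (fun _ _ _ => 0) (fun _ _ _ => 0)
      = α * ∫ ω, (∑ i, S T ω i * V1 i + ∑ t ∈ Ico 1 T, ∑ i, S T ω i * R t ω i) ∂P := by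
  simp [dualValue]

theorem le_dualValue {v lam w : ℕ → Ω → Fin N → ℝ} (hV1 : ∀ i, 0 ≤ V1 i) (hb : ∀ i, 0 ≤ b i)
    (hR_nonneg : ∀ᵐ ω ∂P, ∀ t, 1 ≤ t → t ≤ T - 1 → ∀ i, 0 ≤ R t ω i)
    (hno_flood : ∀ᵐ ω ∂P, ∀ t, 1 ≤ t → t ≤ T - 1 → ∀ i,
      0 ≤ m i - V1 i - ∑ s ∈ Ico 1 t, R s ω i)
    (hy : ∀ᵐ ω ∂P, ∀ t, 1 ≤ t → t ≤ T - 1 → ∀ i,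
      0 ≤ v t ω i ∧ 0 ≤ lam t ω i ∧ 0 ≤ w t ω i) :
    α * ∫ ω, (∑ i, S T ω i * V1 i + ∑ t ∈ Ico 1 T, ∑ i, S T ω i * R t ω i) ∂P
      ≤ dualValue P T S R V1 b m α v lam w := by
  refine le_add_of_nonneg_right (sum_nonneg fun t ht => integral_nonneg_of_ae ?_)
  obtain ⟨ht1, htT⟩ := mem_Ico.mp ht
  filter_upwards [hy, hR_nonneg, hno_flood] with ω hyω hRω hfloodω
  have hyt := hyω t ht1 (by omega)
  have hinflow : ∀ i, 0 ≤ ∑ s ∈ Ico 1 t, R s ω i := fun i =>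
    sum_nonneg fun s hs => hRω s (mem_Ico.mp hs).1 (by have := (mem_Ico.mp hs).2; omega) i
  refine add_nonneg (add_nonneg ?_ ?_) ?_ <;> refine sum_nonneg fun i _ => mul_nonneg ?_ ?_
  exacts [(hyt i).2.1, add_nonneg (hV1 i) (hinflow i), (hyt i).1, hb i, (hyt i).2.2,
    hfloodω t ht1 (by omega) i]

end DualProblem

theorem dual_solution_martingale_general {Ω : Type*} {mΩ : MeasurableSpace Ω}
    (P : Measure Ω) [IsProbabilityMeasure P]
    (T N : ℕ)
    (G : ℕ → MeasurableSpace Ω)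
    (hG_le : ∀ t, G t ≤ mΩ)
    (S R : ℕ → Ω → Fin N → ℝ)
    (V1 b m : Fin N → ℝ) (α : ℝ) (hα : α = 1)
    (hmart : ∀ s t, 1 ≤ s → s ≤ t → t ≤ T → ∀ i,
      P[(fun ω => S t ω i)|G s] =ᵐ[P] fun ω => S s ω i)
    (hV1 : ∀ i, 0 ≤ V1 i) (hb : ∀ i, 0 ≤ b i)
    (hR_nonneg : ∀ᵐ ω ∂P, ∀ t, 1 ≤ t → t ≤ T - 1 → ∀ i, 0 ≤ R t ω i)
    (hno_flood : ∀ᵐ ω ∂P, ∀ t, 1 ≤ t → t ≤ T - 1 → ∀ i,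
      0 ≤ m i - V1 i - ∑ s ∈ Finset.Ico 1 t, R s ω i) :
    DualFeasible P T G S α
        (fun _ _ _ => 0) (fun _ _ _ => 0) (fun _ _ _ => 0) (fun _ _ _ => 0) ∧
    dualValue P T S R V1 b m α (fun _ _ _ => 0) (fun _ _ _ => 0) (fun _ _ _ => 0)
      = ∫ ω, (∑ i, S T ω i * V1 i
          + ∑ t ∈ Finset.Ico 1 T, ∑ i, S T ω i * R t ω i) ∂P ∧
    ∀ gam v lam w : ℕ → Ω → Fin N → ℝ,
      IsDualVariable P T gam v lam w → DualFeasible P T G S α gam v lam w →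
      ∫ ω, (∑ i, S T ω i * V1 i
          + ∑ t ∈ Finset.Ico 1 T, ∑ i, S T ω i * R t ω i) ∂P
        ≤ dualValue P T S R V1 b m α v lam w := by
  refine ⟨dualFeasible_zero_of_martingale P T S α G hG_le hα hmart, by simp [dualValue_zero, hα],
    fun gam v lam w hy _ => ?_⟩
  simpa [hα] using le_dualValue P T S R V1 b m α hV1 hb hR_nonneg hno_flood
    (hy.2.mono fun ω hω t ht1 htT i => (hω t ht1 htT i).2)

/-- **Solution of the dual problem in the martingale case**: if `α = 1`, the price
process is a coordinatewise martingale w.r.t. `(G_t)`, `V(1) ≥ 0`, `b ≥ 0`,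
`R(t) ≥ 0` a.s., and a.s. no dam would flood even without draining, then the zero
dual variable is dual feasible with value `d* = E[S(T)·V(1) + ∑_{t=1}^{T-1} S(T)·R(t)]`,
and every dual feasible variable `y` satisfies `Φ(y) ≥ d*`; hence the optimal dual
value is `d*`, attained at `y = 0`. -/
theorem dual_solution_martingale {Ω : Type*} {mΩ : MeasurableSpace Ω}
    (P : Measure Ω) [IsProbabilityMeasure P]
    (T N : ℕ) (hT : 2 ≤ T) (hN : 1 ≤ N)
    (G : ℕ → MeasurableSpace Ω)
    (hG_mono : ∀ s t, s ≤ t → G s ≤ G t) (hG_le : ∀ t, G t ≤ mΩ)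
    (S R : ℕ → Ω → Fin N → ℝ)
    (hS_adapted : ∀ t, 1 ≤ t → t ≤ T → Measurable[G t] (S t))
    (hS_bdd : ∃ C : ℝ, ∀ t ω i, |S t ω i| ≤ C)
    (hR_meas : ∀ t, Measurable (R t))
    (hR_bdd : ∃ C : ℝ, ∀ t ω i, |R t ω i| ≤ C)
    (V1 b m : Fin N → ℝ) (α : ℝ) (hα : α = 1)
    (hmart : ∀ s t, 1 ≤ s → s ≤ t → t ≤ T → ∀ i,
      P[(fun ω => S t ω i)|G s] =ᵐ[P] fun ω => S s ω i)
    (hV1 : ∀ i, 0 ≤ V1 i) (hb : ∀ i, 0 ≤ b i)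
    (hR_nonneg : ∀ᵐ ω ∂P, ∀ t, 1 ≤ t → t ≤ T - 1 → ∀ i, 0 ≤ R t ω i)
    (hno_flood : ∀ᵐ ω ∂P, ∀ t, 1 ≤ t → t ≤ T - 1 → ∀ i,
      0 ≤ m i - V1 i - ∑ s ∈ Finset.Ico 1 t, R s ω i) :
    DualFeasible P T G S α
        (fun _ _ _ => 0) (fun _ _ _ => 0) (fun _ _ _ => 0) (fun _ _ _ => 0) ∧
    dualValue P T S R V1 b m α (fun _ _ _ => 0) (fun _ _ _ => 0) (fun _ _ _ => 0)
      = ∫ ω, (∑ i, S T ω i * V1 i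
          + ∑ t ∈ Finset.Ico 1 T, ∑ i, S T ω i * R t ω i) ∂P ∧
    ∀ gam v lam w : ℕ → Ω → Fin N → ℝ,
      IsDualVariable P T gam v lam w → DualFeasible P T G S α gam v lam w →
      ∫ ω, (∑ i, S T ω i * V1 i
          + ∑ t ∈ Finset.Ico 1 T, ∑ i, S T ω i * R t ω i) ∂P
        ≤ dualValue P T S R V1 b m α v lam w :=
  dual_solution_martingale_general P T N G hG_le S R V1 b m α hα hmart hV1 hb hR_nonneg hno_flood
end
end

section
/- Revenue identity for the two-dam network in the martingale case with identical prices: suppose the two dams have the same scalar price process S = (S(t))_{t=1}^{T}, which is bounded, adapted to (G_t) and a martingale with respect to (G_t) and P, and take α = 1. Let D_1, D_2, T̄, O be admissible controls (each of D_1(t), D_2(t), T̄(t), O(t) : Ω → ℝ is G_t-measurable and bounded for t = 1,…,T−1), with induced water levels V_1(t) = V_1(1) + Σ_{s=1}^{t−1} (R_1(s) − D_1(s) − T̄(s)) and V_2(t) = V_2(1) + Σ_{s=1}^{t−1} (R_2(s) + T̄(s) − D_2(s) − O(s)). Then E[Σ_{t=1}^{T−1} (D_1(t) + D_2(t)) S(t+1)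 + S(T)(V_1(T) + V_2(T))] = E[S(T)(V_1(1) + V_2(1)) + Σ_{t=1}^{T−1} S(T)(R_1(t) + R_2(t))] − Σ_{t=1}^{T−1} E[O(t) S(T)]. In particular, if in addition S(T) ≥ 0 almost surely and O(t) ≥ 0 almost surely for all t, the expected revenue is at most d* := E[S(T)(V_1(1) + V_2(1)) + Σ_{t=1}^{T−1} S(T)(R_1(t) + R_2(t))]. -/
open MeasureTheory Finset

noncomputable section

/-- Water level of dam 1 in the two-dam network:
`V₁(t) = V₁(1) + ∑_{s=1}^{t-1} (R₁(s) - D₁(s) - T̄(s))`. -/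
def waterLevel1 {Ω : Type*} (V11 : ℝ) (R1 D1 Tbar : ℕ → Ω → ℝ)
    (t : ℕ) (ω : Ω) : ℝ :=
  V11 + ∑ s ∈ Finset.Ico 1 t, (R1 s ω - D1 s ω - Tbar s ω)

/-- Water level of dam 2 in the two-dam network:
`V₂(t) = V₂(1) + ∑_{s=1}^{t-1} (R₂(s) + T̄(s) - D₂(s) - O(s))`. -/
def waterLevel2 {Ω : Type*} (V21 : ℝ) (R2 D2 Tbar O : ℕ → Ω → ℝ)
    (t : ℕ) (ω : Ω) : ℝ :=
  V21 + ∑ s ∈ Finset.Ico 1 t, (R2 s ω + Tbar s ω - D2 s ω - O s ω)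

/-! The transfer `T̄` cancels in `V₁ + V₂`, so pointwise the revenue equals the `d*` integrand
plus `∑ (D₁(t) + D₂(t)) (S(t+1) - S(T))` minus `∑ O(t) S(T)`. Each term of the middle sum has
zero expectation: `D₁(t) + D₂(t)` is bounded and `G_{t+1}`-measurable, so it can be pulled out
of `E[· | G_{t+1}]`, and `E[S(T) | G_{t+1}] = S(t+1)`. The inequality follows from
`O(t) S(T) ≥ 0`. -/

section

variable {Ω : Type*} {mΩ : MeasurableSpace Ω} {μ : Measure Ω}

lemma memLp_top_of_abs_le {m : MeasurableSpace Ω} (hm : m ≤ mΩ) {f : Ω → ℝ}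
    (hf : Measurable[m] f) {C : ℝ} (hC : ∀ ω, |f ω| ≤ C) : MemLp f ⊤ μ :=
  memLp_top_of_bound (hf.mono hm le_rfl).aestronglyMeasurable C (ae_of_all _ hC)

lemma integral_mul_sub_eq_zero_of_condExp_ae_eq {m : MeasurableSpace Ω} (hm : m ≤ mΩ)
    [SigmaFinite (μ.trim hm)] {X Y Z : Ω → ℝ} (hXm : StronglyMeasurable[m] X) (hX : MemLp X ⊤ μ)
    (hY : Integrable Y μ) (hYZ : μ[Y|m] =ᵐ[μ] Z) :
    ∫ ω, X ω * (Z ω - Y ω) ∂μ = 0 := by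
  have hXY : Integrable (fun ω => X ω * Y ω) μ :=
    hX.integrable_mul (memLp_one_iff_integrable.2 hY)
  have hXZ : Integrable (fun ω => X ω * Z ω) μ :=
    hX.integrable_mul (memLp_one_iff_integrable.2 (integrable_condExp.congr hYZ))
  have pull_out : ∫ ω, X ω * Y ω ∂μ = ∫ ω, X ω * Z ω ∂μ := calc
    ∫ ω, X ω * Y ω ∂μ = ∫ ω, μ[X * Y|m] ω ∂μ := (integral_condExp hm).symm
    _ = ∫ ω, X ω * Z ω ∂μ := integral_congr_ae <|
      (condExp_mul_of_stronglyMeasurable_left hXm hXY hY).trans hYZ.mul_left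
  simp only [mul_sub]
  rw [integral_sub hXZ hXY, pull_out, sub_self]

lemma integral_eq_sub_sum_of_integral_eq_zero {ι : Type*} (s : Finset ι) {f g : Ω → ℝ}
    {F H : ι → Ω → ℝ} (hfg : ∀ ω, f ω = g ω + ∑ i ∈ s, F i ω - ∑ i ∈ s, H i ω)
    (hg : Integrable g μ) (hF : ∀ i ∈ s, Integrable (F i) μ) (hH : ∀ i ∈ s, Integrable (H i) μ)
    (hF0 : ∀ i ∈ s, ∫ ω, F i ω ∂μ = 0) :
    ∫ ω, f ω ∂μ = ∫ ω, g ω ∂μ - ∑ i ∈ s, ∫ ω, H i ω ∂μ := by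
  have hsumF : Integrable (fun ω => ∑ i ∈ s, F i ω) μ := integrable_finsetSum s hF
  simp only [hfg]
  rw [integral_sub (f := fun ω => g ω + ∑ i ∈ s, F i ω) (hg.add hsumF)
    (integrable_finsetSum s hH), integral_add hg hsumF, integral_finsetSum s hF,
    integral_finsetSum s hH, sum_eq_zero hF0, add_zero]

lemma waterLevel1_add_waterLevel2 (V11 V21 : ℝ) (R1 R2 D1 D2 Tbar O : ℕ → Ω → ℝ) (t : ℕ)
    (ω : Ω) :
    waterLevel1 V11 R1 D1 Tbar t ω + waterLevel2 V21 R2 D2 Tbar O t ω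
      = V11 + V21 + ∑ s ∈ Ico 1 t, (R1 s ω + R2 s ω - D1 s ω - D2 s ω - O s ω) := by
  rw [waterLevel1, waterLevel2, add_add_add_comm, ← sum_add_distrib]
  exact congrArg _ (sum_congr rfl fun _ _ => by ring)

lemma revenue_eq_add_sum_sub_sum (T : ℕ) (V11 V21 : ℝ) (S R1 R2 D1 D2 Tbar O : ℕ → Ω → ℝ)
    (ω : Ω) :
    ∑ t ∈ Ico 1 T, (D1 t ω + D2 t ω) * S (t + 1) ω
        + S T ω * (waterLevel1 V11 R1 D1 Tbar T ω + waterLevel2 V21 R2 D2 Tbar O T ω)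
      = (S T ω * (V11 + V21) + ∑ t ∈ Ico 1 T, S T ω * (R1 t ω + R2 t ω))
        + ∑ t ∈ Ico 1 T, (D1 t ω + D2 t ω) * (S (t + 1) ω - S T ω)
        - ∑ t ∈ Ico 1 T, O t ω * S T ω := by
  rw [waterLevel1_add_waterLevel2, mul_add, mul_sum, add_left_comm, ← sum_add_distrib, add_assoc,
    ← sum_add_distrib, add_sub_assoc, ← sum_sub_distrib]
  exact congrArg _ (sum_congr rfl fun _ _ => by ring)

end

/-- **Revenue identity for the two-dam network in the martingale case with
identical prices**: if the common scalar price process is a bounded adapted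
martingale and `α = 1`, then for all admissible controls `D₁, D₂, T̄, O`,
`E[∑_{t=1}^{T-1} (D₁(t)+D₂(t)) S(t+1) + S(T)(V₁(T)+V₂(T))]
 = E[S(T)(V₁(1)+V₂(1)) + ∑_{t=1}^{T-1} S(T)(R₁(t)+R₂(t))] - ∑_{t=1}^{T-1} E[O(t) S(T)]`;
in particular, if moreover `S(T) ≥ 0` a.s. and `O(t) ≥ 0` a.s. for all `t`, the
expected revenue is at most
`d* = E[S(T)(V₁(1)+V₂(1)) + ∑_{t=1}^{T-1} S(T)(R₁(t)+R₂(t))]`. -/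
theorem two_dam_revenue_martingale {Ω : Type*} {mΩ : MeasurableSpace Ω}
    (P : Measure Ω) [IsProbabilityMeasure P]
    (T : ℕ) (hT : 2 ≤ T)
    (G : ℕ → MeasurableSpace Ω)
    (hG_mono : ∀ s t, s ≤ t → G s ≤ G t) (hG_le : ∀ t, G t ≤ mΩ)
    (S : ℕ → Ω → ℝ)
    (hS_adapted : ∀ t, 1 ≤ t → t ≤ T → Measurable[G t] (S t))
    (hS_bdd : ∃ C : ℝ, ∀ t ω, |S t ω| ≤ C)
    (hmart : ∀ s t, 1 ≤ s → s ≤ t → t ≤ T →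
      P[(S t)|G s] =ᵐ[P] S s)
    (α : ℝ) (hα : α = 1)
    (R1 R2 : ℕ → Ω → ℝ)
    (hR_meas : ∀ t, Measurable (R1 t) ∧ Measurable (R2 t))
    (hR_bdd : ∃ C : ℝ, ∀ t ω, |R1 t ω| ≤ C ∧ |R2 t ω| ≤ C)
    (V11 V21 : ℝ)
    (D1 D2 Tbar O : ℕ → Ω → ℝ)
    (hadm : ∀ t, 1 ≤ t → t ≤ T - 1 →
      (Measurable[G t] (D1 t) ∧ Measurable[G t] (D2 t) ∧
        Measurable[G t] (Tbar t) ∧ Measurable[G t] (O t)) ∧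
      ∃ C : ℝ, ∀ ω, |D1 t ω| ≤ C ∧ |D2 t ω| ≤ C ∧ |Tbar t ω| ≤ C ∧ |O t ω| ≤ C) :
    (∫ ω, (∑ t ∈ Finset.Ico 1 T, (D1 t ω + D2 t ω) * S (t + 1) ω
        + α * S T ω * (waterLevel1 V11 R1 D1 Tbar T ω
            + waterLevel2 V21 R2 D2 Tbar O T ω)) ∂P
      = ∫ ω, (S T ω * (V11 + V21)
          + ∑ t ∈ Finset.Ico 1 T, S T ω * (R1 t ω + R2 t ω)) ∂P
        - ∑ t ∈ Finset.Ico 1 T, ∫ ω, O t ω * S T ω ∂P) ∧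
    ((∀ᵐ ω ∂P, 0 ≤ S T ω) →
      (∀ᵐ ω ∂P, ∀ t, 1 ≤ t → t ≤ T - 1 → 0 ≤ O t ω) →
      ∫ ω, (∑ t ∈ Finset.Ico 1 T, (D1 t ω + D2 t ω) * S (t + 1) ω
          + α * S T ω * (waterLevel1 V11 R1 D1 Tbar T ω
              + waterLevel2 V21 R2 D2 Tbar O T ω)) ∂P
        ≤ ∫ ω, (S T ω * (V11 + V21)
            + ∑ t ∈ Finset.Ico 1 T, S T ω * (R1 t ω + R2 t ω)) ∂P) := by
  subst hα
  simp only [one_mul]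
  obtain ⟨CS, hCS⟩ := hS_bdd
  obtain ⟨CR, hCR⟩ := hR_bdd
  have hS : ∀ t, 1 ≤ t → t ≤ T → MemLp (S t) ⊤ P := fun t h1 h2 =>
    memLp_top_of_abs_le (hG_le t) (hS_adapted t h1 h2) (hCS t)
  have hST : MemLp (S T) ⊤ P := hS T (by omega) le_rfl
  have hR : ∀ t, MemLp (R1 t + R2 t) ⊤ P := fun t =>
    (memLp_top_of_abs_le le_rfl (hR_meas t).1 fun ω => (hCR t ω).1).add
      (memLp_top_of_abs_le le_rfl (hR_meas t).2 fun ω => (hCR t ω).2)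
  have hctrl : ∀ t ∈ Ico 1 T, StronglyMeasurable[G (t + 1)] (D1 t + D2 t) ∧
      MemLp (D1 t + D2 t) ⊤ P ∧ MemLp (O t) ⊤ P := by
    intro t ht
    obtain ⟨⟨hD1, hD2, -, hO⟩, C, hC⟩ := hadm t (mem_Ico.1 ht).1 (by grind)
    exact ⟨((hD1.add hD2).mono (hG_mono t (t + 1) (by omega)) le_rfl).stronglyMeasurable,
      (memLp_top_of_abs_le (hG_le t) hD1 fun ω => (hC ω).1).add
        (memLp_top_of_abs_le (hG_le t) hD2 fun ω => (hC ω).2.1),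
      memLp_top_of_abs_le (hG_le t) hO fun ω => (hC ω).2.2.2⟩
  have key := integral_eq_sub_sum_of_integral_eq_zero (Ico 1 T)
    (revenue_eq_add_sum_sub_sum T V11 V21 S R1 R2 D1 D2 Tbar O)
    (((hST.mul_const _).add (memLp_finsetSum _ fun t _ => (hR t).mul' hST)).integrable le_top)
    (fun t ht =>
      (((hS (t + 1) (by grind) (by grind)).sub hST).mul' (hctrl t ht).2.1).integrable le_top)
    (fun t ht => (hST.mul' (hctrl t ht).2.2).integrable le_top)
    (fun t ht => integral_mul_sub_eq_zero_of_condExp_ae_eq (hG_le (t + 1)) (hctrl t ht).1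
      (hctrl t ht).2.1 (hST.integrable le_top) (hmart (t + 1) T (by omega) (by grind) le_rfl))
  refine ⟨key, fun hS0 hO0 => key ▸ sub_le_self _ (sum_nonneg fun t ht => ?_)⟩
  refine integral_nonneg_of_ae ?_
  filter_upwards [hS0, hO0] with ω hSω hOω
  exact mul_nonneg (hOω t (mem_Ico.1 ht).1 (by grind)) hSω
end
end

section
/- Let E be a real normed vector space and let φ : E → ℝ ∪ {+∞} be a convex function (its epigraph {(u, r) ∈ E × ℝ : φ(u) ≤ r} is a convex set) such that φ(0) is finite and φ is lower semicontinuous at 0. Then there is no duality gap at 0: sup over continuous linear functionals y : E → ℝ of ( inf_{u ∈ E} (φ(u) + y(u)) ) = φ(0), where the supremum and infimum are taken in ℝ ∪ {±∞}. -/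
/-!
Weak duality is the choice `u = 0`. Conversely, for a real `c < φ 0`, lower semicontinuity gives a
convex open neighbourhood `U` of `0` on which `φ > c`, so the open convex set `U × (-∞, c)` misses
the epigraph of `φ` and a closed hyperplane separates them. The hyperplane is not vertical, since it
separates `(0, t)` for `t < c` from `(0, φ 0)`; normalising its vertical slope to `1` yields a
functional `y` with `c ≤ φ u + y u` for every `u`.
-/

open Set

section Epigraph

variable {E : Type*}

def epigraph (φ : E → EReal) : Set (E × ℝ) := {p | φ p.1 ≤ p.2}

variable [AddCommGroup E] [Module ℝ E] [TopologicalSpace E]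

lemma ContinuousLinearMap.apply_prod_eq_add_mul (f : E × ℝ →L[ℝ] ℝ) (u : E) (t : ℝ) :
    f (u, t) = f.comp (.inl ℝ E ℝ) u + t * f (0, 1) := by
  have : (u, t) = (u, (0 : ℝ)) + t • ((0 : E), (1 : ℝ)) := by simp
  rw [this, map_add, map_smul, smul_eq_mul]
  rfl

variable [IsTopologicalAddGroup E] [ContinuousSMul ℝ E]

theorem exists_coe_le_add_of_forall_mem_lt {φ : E → EReal} (hconv : Convex ℝ (epigraph φ))
    {r₀ : ℝ} (h0 : φ 0 ≤ r₀) {U : Set E} (hUo : IsOpen U) (hUc : Convex ℝ U) (hU0 : (0 : E) ∈ U)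
    {c : ℝ} (hU : ∀ u ∈ U, (c : EReal) < φ u) :
    ∃ y : E →L[ℝ] ℝ, ∀ u, (c : EReal) ≤ φ u + y u := by
  have hdisj : Disjoint (U ×ˢ Iio c) (epigraph φ) := by
    refine disjoint_left.2 fun ⟨u, t⟩ ⟨hu, ht⟩ hle => ?_
    exact (EReal.coe_lt_coe_iff.1 ((hU u hu).trans_le hle)).not_gt ht
  obtain ⟨f, s, hbelow, habove⟩ :=
    geometric_hahn_banach_open (hUc.prod (convex_Iio c)) (hUo.prod isOpen_Iio) hconv hdisj
  set g := f.comp (.inl ℝ E ℝ)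
  set β := f (0, 1)
  have hbelow' (t : ℝ) (ht : t < c) : t * β < s := by
    have := hbelow (0, t) ⟨hU0, ht⟩
    rwa [f.apply_prod_eq_add_mul, map_zero, zero_add] at this
  have habove' (u : E) (t : ℝ) (ht : φ u ≤ t) : s ≤ g u + t * β :=
    f.apply_prod_eq_add_mul u t ▸ habove (u, t) ht
  have hβ : 0 < β := by
    have h₁ := hbelow' (min c r₀ - 1) (by linarith [min_le_left c r₀])
    have h₂ := habove' 0 r₀ h0
    rw [map_zero, zero_add] at h₂
    exact pos_of_mul_pos_right (by linarith : 0 < (r₀ - (min c r₀ - 1)) * β)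
      (by linarith [min_le_right c r₀])
  have hcβ : c * β ≤ s := by
    rw [← le_div_iff₀ hβ]
    exact le_of_forall_lt fun t ht => (lt_div_iff₀ hβ).2 (hbelow' t ht)
  refine ⟨β⁻¹ • g, fun u => ?_⟩
  refine (EReal.sub_le_iff_le_add (.inl (EReal.coe_ne_bot _)) (.inl (EReal.coe_ne_top _))).1 ?_
  refine EReal.le_of_forall_lt_iff_le.1 fun t ht => ?_
  rw [← EReal.coe_sub, EReal.coe_le_coe_iff, smul_apply, smul_eq_mul,
    ← div_eq_inv_mul, sub_le_comm, le_div_iff₀ hβ]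
  linarith [habove' u t ht.le]

end Epigraph

theorem no_duality_gap_of_lsc_at_zero_general
    {E : Type*} [NormedAddCommGroup E] [NormedSpace ℝ E]
    (φ : E → EReal)
    (hconv : Convex ℝ {p : E × ℝ | φ p.1 ≤ (p.2 : EReal)})
    (hfin : ∃ r : ℝ, φ 0 = (r : EReal))
    (hlsc : LowerSemicontinuousAt φ 0) :
    ⨆ y : E →L[ℝ] ℝ, ⨅ u : E, (φ u + (y u : EReal)) = φ 0 := by
  obtain ⟨r₀, hr₀⟩ := hfin
  refine le_antisymm (iSup_le fun y => (iInf_le _ 0).trans (by simp)) ?_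
  refine EReal.ge_of_forall_gt_iff_ge.1 fun c hc => ?_
  obtain ⟨ε, hε, hball⟩ := Metric.eventually_nhds_iff_ball.1 (hlsc c hc)
  obtain ⟨y, hy⟩ := exists_coe_le_add_of_forall_mem_lt hconv hr₀.le Metric.isOpen_ball
    (convex_ball 0 ε) (Metric.mem_ball_self hε) hball
  exact le_iSup_of_le y (le_iInf hy)

/-- **Abstract no-duality-gap criterion of conjugate duality**: let `E` be a real
normed vector space and `φ : E → ℝ ∪ {+∞}` (formalized as an `EReal`-valued
function never taking the value `-∞`) be convex (its epigraph is convex), with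
`φ 0` finite, and lower semicontinuous at `0`.  Then
`sup_{y ∈ E*} inf_{u ∈ E} (φ(u) + y(u)) = φ(0)`, the supremum being over
continuous linear functionals `y : E → ℝ` and the extrema taken in `ℝ ∪ {±∞}`. -/
theorem no_duality_gap_of_lsc_at_zero
    {E : Type*} [NormedAddCommGroup E] [NormedSpace ℝ E]
    (φ : E → EReal)
    (hne_bot : ∀ u, φ u ≠ ⊥)
    (hconv : Convex ℝ {p : E × ℝ | φ p.1 ≤ (p.2 : EReal)})
    (hfin : ∃ r : ℝ, φ 0 = (r : EReal))
    (hlsc : LowerSemicontinuousAt φ 0) :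
    ⨆ y : E →L[ℝ] ℝ, ⨅ u : E, (φ u + (y u : EReal)) = φ 0 :=
  no_duality_gap_of_lsc_at_zero_general φ hconv hfin hlsc
end
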